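/- arXiv:2506.21823 — 2 statements merged into one kernel-verified Lean document; each statement's English description precedes it below -/
import Mathlib

section
/- Let x₀ ≥ e be a real number and let (λ_k)_{k ≥ 3} be a sequence of real numbers with λ₃ ≥ 1 defined recursively for k ≥ 4 by λ_k = (1/c_k)·(1/(k−1)! + k) + k³·λ_{k−1}·c_k^{1/(k−1)}/(log x₀)^{(k−1)/k}, where c_k = [((k−1)/(2k·λ_{k−1})) · (1/(k−1)! + 1)]^{(k−1)/k}. Then for every integer k ≥ 7: λ_k ≤ 1.19 · k^{3k−9} · λ₃. -/
open Real

lemma aux_step (L : ℝ) (hL : 1 ≤ L) (k : ℕ) (hk : 4 ≤ k) (lamm lamk ck : ℝ)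
    (hlamm : 1 ≤ lamm)
    (hck : ck = ((((k : ℝ) - 1) / (2 * k * lamm))
          * (1 / (Nat.factorial (k - 1) : ℝ) + 1)) ^ (((k : ℝ) - 1) / k))
    (hlk : lamk = (1 / ck) * (1 / (Nat.factorial (k - 1) : ℝ) + k)
          + (k : ℝ) ^ 3 * lamm * ck ^ (1 / ((k : ℝ) - 1)) / L ^ (((k : ℝ) - 1) / k)) :
    (k : ℝ) ≤ lamk ∧
      lamk ≤ lamm * ((k : ℝ) ^ 3 + 3 * k + 3 / (Nat.factorial (k - 1) : ℝ)) := by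
  set F : ℝ := (Nat.factorial (k - 1) : ℝ) with hFdef
  have hF : 1 ≤ F := by
    rw [hFdef]; exact_mod_cast Nat.one_le_iff_ne_zero.mpr (Nat.factorial_ne_zero _)
  have hF0 : (0:ℝ) < F := lt_of_lt_of_le one_pos hF
  have ht0 : (0:ℝ) ≤ 1 / F := by positivity
  have ht1 : 1 / F ≤ 1 := by rw [div_le_one hF0]; exact hF
  have hK : (4:ℝ) ≤ (k:ℝ) := by exact_mod_cast hk
  have hlamm0 : (0:ℝ) < lamm := lt_of_lt_of_le one_pos hlamm
  have h2k : (0:ℝ) < 2 * k * lamm := by nlinarith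
  set b : ℝ := (((k : ℝ) - 1) / (2 * k * lamm)) * (1 / F + 1) with hbdef
  have hb0 : (0:ℝ) < b := mul_pos (div_pos (by linarith) h2k) (by linarith)
  have hb1 : b ≤ 1 := by
    rw [hbdef, div_mul_eq_mul_div, div_le_one h2k]
    nlinarith [mul_le_mul_of_nonneg_left ht1 (show (0:ℝ) ≤ (k:ℝ) - 1 by linarith)]
  have he0 : (0:ℝ) ≤ ((k:ℝ) - 1) / k := div_nonneg (by linarith) (by linarith)
  have he1 : ((k:ℝ) - 1) / k ≤ 1 := (div_le_one (by linarith)).mpr (by linarith)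
  have hc0 : (0:ℝ) < ck := by rw [hck]; exact Real.rpow_pos_of_pos hb0 _
  have hc1 : ck ≤ 1 := by rw [hck]; exact Real.rpow_le_one hb0.le hb1 he0
  have hbc : b ≤ ck := by
    rw [hck]
    calc b = b ^ (1:ℝ) := (Real.rpow_one b).symm
    _ ≤ b ^ (((k:ℝ) - 1) / k) := Real.rpow_le_rpow_of_exponent_ge hb0 hb1 he1
  have hcinv : 1 / ck ≤ 3 * lamm := by
    have h1 : 1 / ck ≤ 1 / b := one_div_le_one_div_of_le hb0 hbc
    have h2 : 1 / b ≤ 3 * lamm := by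
      rw [div_le_iff₀ hb0]
      have hbexp : 3 * lamm * b = (3 * ((k:ℝ) - 1) * (1 / F + 1)) / (2 * (k:ℝ)) := by
        rw [hbdef]; field_simp
      rw [hbexp, le_div_iff₀ (by linarith)]
      nlinarith
    linarith
  have hr0 : (0:ℝ) ≤ ck ^ (1 / ((k:ℝ) - 1)) := Real.rpow_nonneg hc0.le _
  have hr1 : ck ^ (1 / ((k:ℝ) - 1)) ≤ 1 :=
    Real.rpow_le_one hc0.le hc1 (div_nonneg zero_le_one (by linarith))
  have hs1 : 1 ≤ L ^ (((k:ℝ) - 1) / k) := by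
    have := Real.rpow_le_rpow_of_exponent_le hL he0
    rwa [Real.rpow_zero] at this
  have hs0 : (0:ℝ) < L ^ (((k:ℝ) - 1) / k) := lt_of_lt_of_le one_pos hs1
  have hT2 : (k:ℝ) ^ 3 * lamm * ck ^ (1 / ((k:ℝ) - 1)) / L ^ (((k:ℝ) - 1) / k)
      ≤ (k:ℝ) ^ 3 * lamm := by
    have hnum : (k:ℝ) ^ 3 * lamm * ck ^ (1 / ((k:ℝ) - 1)) ≤ (k:ℝ) ^ 3 * lamm := by
      nth_rewrite 2 [← mul_one ((k:ℝ) ^ 3 * lamm)]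
      exact mul_le_mul_of_nonneg_left hr1 (by positivity)
    exact (div_le_self (by positivity) hs1).trans hnum
  have hT2nn : (0:ℝ) ≤ (k:ℝ) ^ 3 * lamm * ck ^ (1 / ((k:ℝ) - 1)) / L ^ (((k:ℝ) - 1) / k) :=
    div_nonneg (by positivity) hs0.le
  constructor
  · have hc1' : 1 ≤ 1 / ck := (le_div_iff₀ hc0).mpr (by linarith)
    have h1 : 1 * (1 / F + (k:ℝ)) ≤ (1 / ck) * (1 / F + (k:ℝ)) :=
      mul_le_mul_of_nonneg_right hc1' (by linarith)
    rw [hlk]; nlinarith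
  · rw [hlk]
    have h1 : (1 / ck) * (1 / F + (k:ℝ)) ≤ 3 * lamm * (1 / F + (k:ℝ)) :=
      mul_le_mul_of_nonneg_right hcinv (by linarith)
    calc (1 / ck) * (1 / F + (k:ℝ))
          + (k:ℝ) ^ 3 * lamm * ck ^ (1 / ((k:ℝ) - 1)) / L ^ (((k:ℝ) - 1) / k)
        ≤ 3 * lamm * (1 / F + (k:ℝ)) + (k:ℝ) ^ 3 * lamm := add_le_add h1 hT2
      _ = lamm * ((k:ℝ) ^ 3 + 3 * k + 3 / F) := by ring

theorem stmt_6 (x₀ : ℝ) (hx₀ : Real.exp 1 ≤ x₀)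
    (lam c : ℕ → ℝ) (hlam3 : 1 ≤ lam 3)
    (hc : ∀ k : ℕ, 4 ≤ k →
      c k = ((((k : ℝ) - 1) / (2 * k * lam (k - 1)))
          * (1 / (Nat.factorial (k - 1) : ℝ) + 1)) ^ (((k : ℝ) - 1) / k))
    (hrec : ∀ k : ℕ, 4 ≤ k →
      lam k = (1 / c k) * (1 / (Nat.factorial (k - 1) : ℝ) + k)
          + (k : ℝ) ^ 3 * lam (k - 1) * c k ^ (1 / ((k : ℝ) - 1))
              / Real.log x₀ ^ (((k : ℝ) - 1) / k)) :
    ∀ k : ℕ, 7 ≤ k → lam k ≤ 1.19 * (k : ℝ) ^ (3 * k - 9) * lam 3 := by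
  have hx0pos : 0 < x₀ := lt_of_lt_of_le (Real.exp_pos 1) hx₀
  have hL : 1 ≤ Real.log x₀ := by
    rw [Real.le_log_iff_exp_le hx0pos]; exact hx₀
  -- lower bound: 1 ≤ lam k for k ≥ 3
  have hlow : ∀ k : ℕ, 3 ≤ k → 1 ≤ lam k := by
    intro k hk
    induction k, hk using Nat.le_induction with
    | base => exact hlam3
    | succ n hn ih =>
      have hk4 : 4 ≤ n + 1 := by omega
      have hm : 1 ≤ lam ((n + 1) - 1) := by simpa using ih
      have h := (aux_step (Real.log x₀) hL (n + 1) hk4 (lam ((n + 1) - 1)) (lam (n + 1))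
        (c (n + 1)) hm (hc _ hk4) (hrec _ hk4)).1
      have h1 : (1:ℝ) ≤ ((n + 1 : ℕ) : ℝ) := by exact_mod_cast Nat.one_le_iff_ne_zero.mpr (by omega)
      linarith
  have hup : ∀ k : ℕ, 4 ≤ k →
      lam k ≤ lam (k - 1) * ((k : ℝ) ^ 3 + 3 * k + 3 / (Nat.factorial (k - 1) : ℝ)) :=
    fun k hk => (aux_step (Real.log x₀) hL k hk (lam (k - 1)) (lam k) (c k)
      (hlow (k - 1) (by omega)) (hc k hk) (hrec k hk)).2
  intro k hk
  induction k, hk using Nat.le_induction with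
  | base =>
    have l4 := hup 4 (by norm_num)
    have l5 := hup 5 (by norm_num)
    have l6 := hup 6 (by norm_num)
    have l7 := hup 7 (by norm_num)
    norm_num [Nat.factorial] at l4 l5 l6 l7 ⊢
    linarith
  | succ n hn ih =>
    have hk4 : 4 ≤ n + 1 := by omega
    have hstep := hup (n + 1) hk4
    simp only [Nat.add_sub_cancel] at hstep
    push_cast at hstep
    have hN : (7:ℝ) ≤ (n:ℝ) := by exact_mod_cast hn
    have hexp : 3 * (n + 1) - 9 = (3 * n - 9) + 3 := by omega
    set p : ℕ := 3 * n - 9 with hpdef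
    have hFn : (3:ℝ) ≤ (Nat.factorial n : ℝ) := by
      exact_mod_cast le_trans (show 3 ≤ n by omega) (Nat.self_le_factorial n)
    have ht : 3 / (Nat.factorial n : ℝ) ≤ 1 := (div_le_one (by linarith)).mpr (by linarith)
    have ht0 : (0:ℝ) ≤ 3 / (Nat.factorial n : ℝ) := by positivity
    set F : ℝ := ((n:ℝ) + 1) ^ 3 + 3 * ((n:ℝ) + 1) + 3 / (Nat.factorial n : ℝ) with hFdef
    have hF0 : (0:ℝ) ≤ F := by rw [hFdef]; positivity
    have hFle : F ≤ 2 * ((n:ℝ) + 1) ^ 3 := by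
      rw [hFdef]
      nlinarith [ht, hN, sq_nonneg ((n:ℝ) + 1), mul_nonneg (mul_nonneg (by linarith : (0:ℝ) ≤ (n:ℝ)) (by linarith : (0:ℝ) ≤ (n:ℝ))) (by linarith : (0:ℝ) ≤ (n:ℝ))]
    have hBern : (2:ℝ) ≤ (1 + 1 / (n:ℝ)) ^ p := by
      have h1 : 1 + (p:ℝ) * (1 / (n:ℝ)) ≤ (1 + 1 / (n:ℝ)) ^ p :=
        one_add_mul_le_pow (by
          have h0 : (0:ℝ) ≤ 1 / (n:ℝ) := by positivity
          linarith) p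
      have hpn : (n:ℝ) ≤ (p:ℝ) := by exact_mod_cast (show n ≤ p by omega)
      have : (1:ℝ) ≤ (p:ℝ) * (1 / (n:ℝ)) := by
        rw [mul_one_div, le_div_iff₀ (by linarith)]; linarith
      linarith
    have hpow : 2 * (n:ℝ) ^ p ≤ ((n:ℝ) + 1) ^ p := by
      have heq : ((n:ℝ) + 1) ^ p = (n:ℝ) ^ p * (1 + 1 / (n:ℝ)) ^ p := by
        rw [← mul_pow]; congr 1; field_simp
      rw [heq]
      have hnp : (0:ℝ) ≤ (n:ℝ) ^ p := by positivity
      nlinarith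
    have key : (n:ℝ) ^ p * F ≤ ((n:ℝ) + 1) ^ (p + 3) := by
      calc (n:ℝ) ^ p * F ≤ (n:ℝ) ^ p * (2 * ((n:ℝ) + 1) ^ 3) := by
            exact mul_le_mul_of_nonneg_left hFle (by positivity)
        _ = (2 * (n:ℝ) ^ p) * ((n:ℝ) + 1) ^ 3 := by ring
        _ ≤ ((n:ℝ) + 1) ^ p * ((n:ℝ) + 1) ^ 3 :=
            mul_le_mul_of_nonneg_right hpow (by positivity)
        _ = ((n:ℝ) + 1) ^ (p + 3) := (pow_add _ _ _).symm
    have hlam3nn : (0:ℝ) ≤ lam 3 := by linarith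
    have h2 : lam (n + 1) ≤ (1.19 * (n:ℝ) ^ p * lam 3) * F :=
      hstep.trans (mul_le_mul_of_nonneg_right ih hF0)
    push_cast
    rw [hexp]
    calc lam (n + 1) ≤ (1.19 * (n:ℝ) ^ p * lam 3) * F := h2
      _ = (1.19 * lam 3) * ((n:ℝ) ^ p * F) := by ring
      _ ≤ (1.19 * lam 3) * ((n:ℝ) + 1) ^ (p + 3) :=
          mul_le_mul_of_nonneg_left key (by positivity)
      _ = 1.19 * ((n:ℝ) + 1) ^ (p + 3) * lam 3 := by ring
end

section
/- For every real number u ≥ 84: |∑_{a=1}^{⌊u⌋} 1/a − log u − γ| ≤ 0.501/u. -/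
open Finset Real

lemma logTaylor5 {x : ℝ} (h0 : 0 ≤ x) (h1 : x ≤ 1/2) :
    |Real.log (1+x) - (x - x^2/2 + x^3/3 - x^4/4 + x^5/5)| ≤ x^6/(1-x) := by
  have h : |(-x)| < 1 := by rw [abs_neg, abs_of_nonneg h0]; linarith
  have key := Real.abs_log_sub_add_sum_range_le h 5
  rw [abs_neg, abs_of_nonneg h0] at key
  have hs : (∑ i ∈ Finset.range 5, (-x) ^ (i + 1) / (i + 1)) =
      -x + x^2/2 - x^3/3 + x^4/4 - x^5/5 := by
    simp [Finset.sum_range_succ]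
    ring
  rw [hs] at key
  have h2 : (1 : ℝ) - -x = 1 + x := by ring
  rw [h2] at key
  have heq : Real.log (1+x) - (x - x^2/2 + x^3/3 - x^4/4 + x^5/5)
      = (-x + x^2/2 - x^3/3 + x^4/4 - x^5/5) + Real.log (1+x) := by ring
  rw [heq]
  convert key using 2

lemma logL1 {x : ℝ} (h0 : 0 < x) (h1 : x ≤ 1/84) :
    Real.log (1+x) ≤ x/2 + x/(2*(1+x)) := by
  have ht := (abs_le.mp (logTaylor5 h0.le (by linarith))).2
  have hx1 : (0:ℝ) < 1 - x := by linarith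
  have hx2 : (0:ℝ) < 1 + x := by linarith
  have herr : x^6/(1-x) ≤ x^6 * (84/83) := by
    rw [div_le_iff₀ hx1]
    nlinarith [pow_pos h0 6]
  have hlog : Real.log (1+x) ≤ x - x^2/2 + x^3/3 - x^4/4 + x^5/5 + x^6 * (84/83) := by
    linarith
  have hrhs : x/2 + x/(2*(1+x)) = x*(2+x)/(2*(1+x)) := by
    field_simp
    ring
  rw [hrhs, le_div_iff₀ (by positivity)]
  have h3 : (0:ℝ) < x^3 := pow_pos h0 3
  have h4 : x^4 ≤ x^3 * (1/84) := by nlinarith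
  have h5 : x^5 ≤ x^4 * (1/84) := by nlinarith [pow_pos h0 4]
  have h6 : x^6 ≤ x^5 * (1/84) := by nlinarith [pow_pos h0 5]
  have h7 : x^7 ≤ x^6 * (1/84) := by nlinarith [pow_pos h0 6]
  nlinarith [mul_le_mul_of_nonneg_right hlog (le_of_lt (by linarith : (0:ℝ) < 2*(1+x)))]

lemma logL2 {x : ℝ} (h0 : 0 < x) (h1 : x ≤ 1/84) :
    x/2 + x/(2*(1+x)) - x^3*(2+x)/(12*(1+x)^2) ≤ Real.log (1+x) := by
  have ht := (abs_le.mp (logTaylor5 h0.le (by linarith))).1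
  have hx1 : (0:ℝ) < 1 - x := by linarith
  have hx2 : (0:ℝ) < 1 + x := by linarith
  have herr : x^6/(1-x) ≤ x^6 * (84/83) := by
    rw [div_le_iff₀ hx1]
    nlinarith [pow_pos h0 6]
  have hlog : x - x^2/2 + x^3/3 - x^4/4 + x^5/5 - x^6 * (84/83) ≤ Real.log (1+x) := by
    linarith
  have hrhs : x/2 + x/(2*(1+x)) - x^3*(2+x)/(12*(1+x)^2)
      = (6*x*(1+x)^2 + 6*x*(1+x) - x^3*(2+x))/(12*(1+x)^2) := by
    field_simp
    ring
  rw [hrhs, div_le_iff₀ (by positivity)]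
  have h5p : (0:ℝ) < x^5 := pow_pos h0 5
  have h6 : x^6 ≤ x^5 * (1/84) := by nlinarith
  have h7 : x^7 ≤ x^6 * (1/84) := by nlinarith [pow_pos h0 6]
  have h8 : x^8 ≤ x^7 * (1/84) := by nlinarith [pow_pos h0 7]
  nlinarith [mul_le_mul_of_nonneg_right hlog (le_of_lt (by positivity : (0:ℝ) < 12*(1+x)^2))]

lemma stepA (k : ℕ) (hk : 84 ≤ k) :
    (harmonic k : ℝ) - Real.log k - 1/(2*(k:ℝ)) ≤
      (harmonic (k+1) : ℝ) - Real.log (k+1) - 1/(2*((k:ℝ)+1)) := by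
  have hk0 : (0:ℝ) < (k:ℝ) := by
    have : (0:ℕ) < k := by omega
    exact_mod_cast this
  have hk84 : (84:ℝ) ≤ (k:ℝ) := by exact_mod_cast hk
  have hx0 : (0:ℝ) < 1/(k:ℝ) := by positivity
  have hx1 : 1/(k:ℝ) ≤ 1/84 := by
    apply one_div_le_one_div_of_le <;> linarith
  have hL := logL1 hx0 hx1
  have hlog : Real.log ((k:ℝ)+1) = Real.log k + Real.log (1 + 1/(k:ℝ)) := by
    rw [← Real.log_mul (ne_of_gt hk0) (by positivity)]
    congr 1
    field_simp
  have hh : (harmonic (k+1) : ℝ) = (harmonic k : ℝ) + 1/((k:ℝ)+1) := by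
    push_cast [harmonic_succ]
    ring
  have e1 : (1/(k:ℝ))/(2*(1+1/(k:ℝ))) = 1/(2*((k:ℝ)+1)) := by
    rw [div_eq_div_iff (by positivity) (by positivity)]
    field_simp
  rw [hh, hlog]
  rw [e1] at hL
  have e3 : (1/(k:ℝ))/2 = 1/(2*(k:ℝ)) := by ring
  rw [e3] at hL
  have e4 : 1/((k:ℝ)+1) = 2*(1/(2*((k:ℝ)+1))) := by
    rw [mul_one_div, div_eq_div_iff (by positivity) (by positivity)]
    ring
  linarith

lemma stepB (k : ℕ) (hk : 84 ≤ k) :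
    (harmonic (k+1) : ℝ) - Real.log (k+1) - 1/(2*((k:ℝ)+1)) + 1/(12*((k:ℝ)+1)^2) ≤
      (harmonic k : ℝ) - Real.log k - 1/(2*(k:ℝ)) + 1/(12*(k:ℝ)^2) := by
  have hk0 : (0:ℝ) < (k:ℝ) := by
    have : (0:ℕ) < k := by omega
    exact_mod_cast this
  have hk84 : (84:ℝ) ≤ (k:ℝ) := by exact_mod_cast hk
  have hx0 : (0:ℝ) < 1/(k:ℝ) := by positivity
  have hx1 : 1/(k:ℝ) ≤ 1/84 := by
    apply one_div_le_one_div_of_le <;> linarith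
  have hL := logL2 hx0 hx1
  have hlog : Real.log ((k:ℝ)+1) = Real.log k + Real.log (1 + 1/(k:ℝ)) := by
    rw [← Real.log_mul (ne_of_gt hk0) (by positivity)]
    congr 1
    field_simp
  have hh : (harmonic (k+1) : ℝ) = (harmonic k : ℝ) + 1/((k:ℝ)+1) := by
    push_cast [harmonic_succ]
    ring
  have e1 : (1/(k:ℝ))/(2*(1+1/(k:ℝ))) = 1/(2*((k:ℝ)+1)) := by
    rw [div_eq_div_iff (by positivity) (by positivity)]
    field_simp
  have e2 : (1/(k:ℝ))^3*(2+1/(k:ℝ))/(12*(1+1/(k:ℝ))^2)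
      = 1/(12*(k:ℝ)^2) - 1/(12*((k:ℝ)+1)^2) := by
    rw [div_eq_iff (by positivity)]
    field_simp
    ring
  have e3 : (1/(k:ℝ))/2 = 1/(2*(k:ℝ)) := by ring
  rw [e1, e2, e3] at hL
  rw [hh, hlog]
  have e4 : 1/((k:ℝ)+1) = 2*(1/(2*((k:ℝ)+1))) := by
    rw [mul_one_div, div_eq_div_iff (by positivity) (by positivity)]
    ring
  linarith

lemma tendstoA : Filter.Tendsto (fun k : ℕ => (harmonic k : ℝ) - Real.log k - 1/(2*(k:ℝ)))
    Filter.atTop (nhds Real.eulerMascheroniConstant) := by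
  have h1 := Real.tendsto_harmonic_sub_log
  have h2 : Filter.Tendsto (fun k : ℕ => 1/(2*(k:ℝ))) Filter.atTop (nhds 0) := by
    apply Filter.Tendsto.div_atTop tendsto_const_nhds
    exact (tendsto_natCast_atTop_atTop).const_mul_atTop (by norm_num)
  have := h1.sub h2
  simpa using this

lemma tendstoB : Filter.Tendsto
    (fun k : ℕ => (harmonic k : ℝ) - Real.log k - 1/(2*(k:ℝ)) + 1/(12*(k:ℝ)^2))
    Filter.atTop (nhds Real.eulerMascheroniConstant) := by
  have h1 := tendstoA
  have h2 : Filter.Tendsto (fun k : ℕ => 1/(12*(k:ℝ)^2)) Filter.atTop (nhds 0) := by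
    apply Filter.Tendsto.div_atTop tendsto_const_nhds
    apply Filter.Tendsto.const_mul_atTop (by norm_num : (0:ℝ) < 12)
    exact (Filter.tendsto_pow_atTop (by norm_num)).comp tendsto_natCast_atTop_atTop
  have := h1.add h2
  simpa using this

lemma harmA (n : ℕ) (hn : 84 ≤ n) :
    (harmonic n : ℝ) - Real.log n - Real.eulerMascheroniConstant ≤ 1/(2*(n:ℝ)) := by
  have key : (harmonic n : ℝ) - Real.log n - 1/(2*(n:ℝ)) ≤ Real.eulerMascheroniConstant := by
    apply ge_of_tendsto tendstoA
    filter_upwards [Filter.eventually_ge_atTop n] with k hk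
    induction k, hk using Nat.le_induction with
    | base => exact le_rfl
    | succ k hk ih =>
      refine le_trans ih ?_
      push_cast
      exact stepA k (le_trans hn hk)
  linarith

lemma harmB (n : ℕ) (hn : 85 ≤ n) :
    1/(2*(n:ℝ)) - 1/(12*(n:ℝ)^2) ≤
      (harmonic n : ℝ) - Real.log n - Real.eulerMascheroniConstant := by
  have key : Real.eulerMascheroniConstant ≤
      (harmonic n : ℝ) - Real.log n - 1/(2*(n:ℝ)) + 1/(12*(n:ℝ)^2) := by
    apply le_of_tendsto tendstoB
    filter_upwards [Filter.eventually_ge_atTop n] with k hk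
    induction k, hk using Nat.le_induction with
    | base => exact le_rfl
    | succ k hk ih =>
      refine le_trans ?_ ih
      push_cast
      exact stepB k (by omega)
  linarith

theorem stmt_16 (u : ℝ) (hu : 84 ≤ u) :
    |(∑ a ∈ Finset.Icc 1 ⌊u⌋₊, (1 : ℝ) / a) - Real.log u
        - Real.eulerMascheroniConstant|
      ≤ 0.501 / u := by
  have hu0 : (0:ℝ) < u := by linarith
  set n := ⌊u⌋₊ with hn
  have hn84 : 84 ≤ n := Nat.le_floor (by exact_mod_cast hu)
  have hnR : (84:ℝ) ≤ (n:ℝ) := by exact_mod_cast hn84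
  have hn0 : (0:ℝ) < (n:ℝ) := by linarith
  have hun : (n:ℝ) ≤ u := Nat.floor_le hu0.le
  have hun1 : u < (n:ℝ) + 1 := by
    have := Nat.lt_floor_add_one u
    push_cast at this
    exact this
  have hsum : (∑ a ∈ Finset.Icc 1 n, (1 : ℝ) / a) = (harmonic n : ℝ) := by
    rw [harmonic_eq_sum_Icc]
    push_cast
    simp [one_div]
  rw [hsum, abs_le]
  constructor
  · -- lower bound
    have hB := harmB (n+1) (by omega)
    push_cast at hB
    have hh : (harmonic (n+1) : ℝ) = (harmonic n : ℝ) + 1/((n:ℝ)+1) := by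
      push_cast [harmonic_succ]
      ring
    rw [hh] at hB
    -- log (n+1) - log u ≥ 1 - u/(n+1)
    have hlog : Real.log u - Real.log ((n:ℝ)+1) ≤ u/((n:ℝ)+1) - 1 := by
      have h1 := Real.log_le_sub_one_of_pos (show (0:ℝ) < u/((n:ℝ)+1) by positivity)
      rwa [Real.log_div (ne_of_gt hu0) (by positivity)] at h1
    -- final arithmetic
    have key : -(0.501/u) ≤ 1/(2*((n:ℝ)+1)) - 1/(12*((n:ℝ)+1)^2) - 1/((n:ℝ)+1)
        + 1 - u/((n:ℝ)+1) := by
      set m : ℝ := (n:ℝ)+1 with hm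
      have hm85 : (85:ℝ) ≤ m := by rw [hm]; linarith
      have hum : u ≤ m := hun1.le
      have hmu : m - 1 ≤ u := by rw [hm]; linarith
      have hE : 1/(2*m) - 1/(12*m^2) - 1/m + 1 - u/m
          = (12*m*(m-u) - 6*m - 1)/(12*m^2) := by
        field_simp
        ring
      rw [hE, neg_le, ← neg_div, div_le_div_iff₀ (by positivity) (by positivity)]
      have h1 : (0:ℝ) ≤ u - m + 1 := by linarith
      have h2 : (0:ℝ) ≤ 0.012*m^2 - m := by nlinarith
      have h3 : (0:ℝ) ≤ m - u := by linarith
      have h4 : (0:ℝ) ≤ 6*m*(m-1) - (m-1) + 6.012*m^2 := by nlinarith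
      have h5 : (0:ℝ) ≤ 12*m*(m-u)*(u-m+1) :=
        mul_nonneg (mul_nonneg (by linarith) h3) h1
      nlinarith [mul_nonneg h1 h2, mul_nonneg h3 h4]
    linarith
  · -- upper bound
    have hA := harmA n hn84
    have hlog : Real.log ((n:ℝ)) - Real.log u ≤ (n:ℝ)/u - 1 := by
      have h1 := Real.log_le_sub_one_of_pos (show (0:ℝ) < (n:ℝ)/u by positivity)
      rwa [Real.log_div (ne_of_gt hn0) (ne_of_gt hu0)] at h1
    have key : 1/(2*(n:ℝ)) + (n:ℝ)/u - 1 ≤ 0.501/u := by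
      have hE : 1/(2*(n:ℝ)) + (n:ℝ)/u - 1 = ((1-2*(n:ℝ))*u + 2*(n:ℝ)^2)/(2*(n:ℝ)*u) := by
        field_simp
        ring
      rw [hE, div_le_div_iff₀ (by positivity) hu0]
      nlinarith [mul_nonneg (sub_nonneg.mpr hun) hu0.le]
    linarith
end
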